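/- arXiv:math/0304240 — 7 statements merged into one kernel-verified Lean document; each statement's English description precedes it below -/
import Mathlib

section
/- For positive reals a, b with a ≠ b, the logarithmic mean L(a,b) is at most the average of the arithmetic and geometric means: L(a,b) ≤ (A(a,b) + G(a,b))/2, with equality only when a = b. -/
/-!
Writing `a = s²`, `b = r²`, the logarithmic mean factors as `L(a, b) = L(s, r) · A(s, r)`, while
`(A(a, b) + G(a, b)) / 2 = A(s, r)²`. So the inequality is `L < A` for `s, r`, i.e.
`log t > 2 (t - 1) / (t + 1)` for `t = r / s > 1`.
-/

open Real

noncomputable def logMean (a b : ℝ) : ℝ := (b - a) / (log b - log a)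

theorem logMean_comm (a b : ℝ) : logMean a b = logMean b a := by
  rw [logMean, logMean, ← neg_sub a b, ← neg_sub (log a), neg_div_neg_eq]

theorem logMean_sq (a b : ℝ) : logMean (a ^ 2) (b ^ 2) = logMean a b * ((a + b) / 2) := by
  rw [logMean, logMean, log_pow, log_pow, ← mul_sub]
  push_cast
  rw [mul_comm (2 : ℝ), ← div_div]
  ring

/-- `2 (t - 1) / (t + 1)` is the first term of the series `log t = ∑ₖ 2 x^(2k+1) / (2k+1)`,
`x = (t - 1) / (t + 1)`, whose terms are all positive for `t > 1`. -/
theorem Real.two_mul_sub_one_div_add_one_lt_log {t : ℝ} (ht : 1 < t) :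
    2 * (t - 1) / (t + 1) < log t := by
  have hx : 0 < (t - 1)⁻¹ := inv_pos.2 (sub_pos.2 ht)
  have hsum := hasSum_log_one_add_inv hx
  rw [inv_inv, add_sub_cancel] at hsum
  refine lt_of_lt_of_le ?_ (sum_le_hasSum (Finset.range 2) (fun k _ ↦ by positivity) hsum)
  have ht₁ : t - 1 ≠ 0 := (sub_pos.2 ht).ne'
  have hfirst : 2 * (1 / (2 * ((0 : ℕ) : ℝ) + 1)) * (1 / (2 * (t - 1)⁻¹ + 1)) ^ (2 * 0 + 1) =
      2 * (t - 1) / (t + 1) := by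
    rw [show 2 * (t - 1)⁻¹ + 1 = (t + 1) / (t - 1) by field_simp; ring]
    simp only [Nat.cast_zero, mul_zero, zero_add, div_one, one_div, inv_div, pow_one]
    ring
  rw [Finset.sum_range_succ, Finset.sum_range_one, hfirst, lt_add_iff_pos_right]
  positivity

theorem logMean_lt_add_div_two {a b : ℝ} (ha : 0 < a) (hab : a < b) :
    logMean a b < (a + b) / 2 := by
  have hb := ha.trans hab
  have hlog : 2 * (b - a) / (a + b) < log b - log a := by
    have h := two_mul_sub_one_div_add_one_lt_log ((one_lt_div ha).2 hab)
    rwa [log_div hb.ne' ha.ne', div_sub_one ha.ne', div_add_one ha.ne', mul_div_assoc,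
      div_div_div_cancel_right₀ ha.ne', add_comm b, ← mul_div_assoc] at h
  have hab' : 0 < a + b := by positivity
  rw [div_lt_iff₀ hab'] at hlog
  rw [logMean, div_lt_iff₀ (by nlinarith)]
  linarith

theorem logMean_lt_add_div_two_of_ne {a b : ℝ} (ha : 0 < a) (hb : 0 < b) (hab : a ≠ b) :
    logMean a b < (a + b) / 2 := by
  rcases hab.lt_or_gt with h | h
  · exact logMean_lt_add_div_two ha h
  · rw [logMean_comm, add_comm]
    exact logMean_lt_add_div_two hb h

theorem logMean_lt_avg_arith_geom {a b : ℝ} (ha : 0 < a) (hb : 0 < b) (hab : a ≠ b) :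
    logMean a b < ((a + b) / 2 + √(a * b)) / 2 := by
  obtain ⟨s, hs, rfl⟩ : ∃ s, 0 < s ∧ s ^ 2 = a := ⟨√a, sqrt_pos.2 ha, sq_sqrt ha.le⟩
  obtain ⟨r, hr, rfl⟩ : ∃ r, 0 < r ∧ r ^ 2 = b := ⟨√b, sqrt_pos.2 hb, sq_sqrt hb.le⟩
  have hsr : s ≠ r := fun h ↦ hab (h ▸ rfl)
  rw [← mul_pow, sqrt_sq (by positivity), logMean_sq]
  calc logMean s r * ((s + r) / 2) < (s + r) / 2 * ((s + r) / 2) :=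
        mul_lt_mul_of_pos_right (logMean_lt_add_div_two_of_ne hs hr hsr) (by positivity)
    _ = ((s ^ 2 + r ^ 2) / 2 + s * r) / 2 := by ring

theorem logarithmic_le_avg_arith_geom (a b : ℝ) (ha : 0 < a) (hb : 0 < b) (hab : a ≠ b) :
    (b - a) / (Real.log b - Real.log a) ≤ ((a + b) / 2 + Real.sqrt (a * b)) / 2 ∧
      ((b - a) / (Real.log b - Real.log a) = ((a + b) / 2 + Real.sqrt (a * b)) / 2 → a = b) := by
  have h := logMean_lt_avg_arith_geom ha hb hab
  exact ⟨h.le, fun h' ↦ absurd h' h.ne⟩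
end

section
/- For positive reals a, b with a ≠ b, the identric mean I(a,b) = (1/e)(b^b/a^a)^(1/(b-a)) is strictly less than the arithmetic mean (a+b)/2. -/
/-!
Since `x log x - x` is an antiderivative of `log`, the logarithm of the identric mean is the
mean value `(1/(b-a)) ∫_a^b log` of `log` over the interval, and the theorem is the strict
Hermite–Hadamard inequality for the strictly concave function `log`: its mean value over an
interval is less than its value `log ((a+b)/2)` at the midpoint.
-/

open Real Set

lemma hasDerivAt_mul_log_sub_self {x : ℝ} (hx : x ≠ 0) :
    HasDerivAt (fun x => x * log x - x) (log x) x := by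
  simpa using (hasDerivAt_mul_log hx).fun_sub (hasDerivAt_id' x)

/-- `t ↦ ∫_{m-t}^{m+t} log - 2t log m` vanishes at `0` and has derivative
`log ((m+t)(m-t)) - log (m²) < 0`. -/
lemma mul_log_sub_self_sub_lt {m h : ℝ} (hh : 0 < h) (hhm : h < m) :
    ((m + h) * log (m + h) - (m + h)) - ((m - h) * log (m - h) - (m - h)) < 2 * h * log m := by
  set F : ℝ → ℝ := fun x => x * log x - x
  set g : ℝ → ℝ := fun t => F (m + t) - F (m - t) - 2 * log m * t
  have hg_deriv : ∀ t ∈ Ioo 0 m, HasDerivAt g (log (m + t) + log (m - t) - 2 * log m) t := by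
    rintro t ⟨ht, htm⟩
    have hplus := (hasDerivAt_mul_log_sub_self (by linarith : m + t ≠ 0)).comp_const_add m t
    have hminus := (hasDerivAt_mul_log_sub_self (by linarith : m - t ≠ 0)).comp_const_sub m t
    exact ((hplus.fun_sub hminus).fun_sub ((hasDerivAt_id' t).const_mul (2 * log m))).congr_deriv
      (by ring)
  have hg_anti : StrictAntiOn g (Icc 0 h) := by
    refine strictAntiOn_of_deriv_neg (convex_Icc 0 h) ?_ fun t ht => ?_
    · have hF : Continuous F := continuous_mul_log.sub continuous_id
      exact (by fun_prop : Continuous g).continuousOn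
    · rw [interior_Icc] at ht
      obtain ⟨ht, hth⟩ := ht
      rw [(hg_deriv t ⟨ht, hth.trans hhm⟩).deriv, ← log_mul (by linarith) (by linarith),
        two_mul, ← log_mul (by linarith) (by linarith), sub_neg]
      exact log_lt_log (by nlinarith) (by nlinarith)
  have hgh : g h < g 0 := hg_anti ⟨le_rfl, hh.le⟩ ⟨hh.le, le_rfl⟩ hh
  simp only [g, F, add_zero, sub_zero, mul_zero, sub_self] at hgh
  linarith

lemma slope_mul_log_sub_self_lt_log_midpoint {a b : ℝ} (ha : 0 < a) (hb : 0 < b) (hab : a ≠ b) :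
    slope (fun x => x * log x - x) a b < log ((a + b) / 2) := by
  wlog hlt : a < b generalizing a b
  · rw [slope_comm, add_comm]
    exact this hb ha hab.symm (lt_of_le_of_ne (not_lt.1 hlt) hab.symm)
  have key := mul_log_sub_self_sub_lt (m := (a + b) / 2) (h := (b - a) / 2)
    (by linarith) (by linarith)
  rw [show (a + b) / 2 + (b - a) / 2 = b by ring, show (a + b) / 2 - (b - a) / 2 = a by ring]
    at key
  rw [slope_def_field, div_lt_iff₀ (sub_pos.2 hlt)]
  linarith

lemma exp_slope_mul_log_sub_self {a b : ℝ} (ha : 0 < a) (hb : 0 < b) (hab : a ≠ b) :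
    exp (slope (fun x => x * log x - x) a b) = 1 / exp 1 * (b ^ b / a ^ a) ^ (1 / (b - a)) := by
  have hba : b - a ≠ 0 := sub_ne_zero.2 hab.symm
  rw [rpow_def_of_pos (by positivity), log_div (by positivity) (by positivity), log_rpow hb,
    log_rpow ha, one_div (exp 1), ← exp_neg, ← exp_add, slope_def_field]
  congr 1
  field_simp
  ring

theorem identric_lt_arithmetic_mean (a b : ℝ) (ha : 0 < a) (hb : 0 < b) (hab : a ≠ b) :
    (1 / Real.exp 1) * (b ^ b / a ^ a) ^ (1 / (b - a)) < (a + b) / 2 := by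
  rw [← exp_slope_mul_log_sub_self ha hb hab, ← exp_log (by positivity : 0 < (a + b) / 2)]
  exact exp_lt_exp.2 (slope_mul_log_sub_self_lt_log_midpoint ha hb hab)
end

section
/- For positive reals a, b with a ≠ b, the average of the arithmetic and geometric means is strictly less than the identric mean: (A(a,b) + G(a,b))/2 < I(a,b). -/
/-! With `p = √a`, `q = √b`, `m = (p + q) / 2` and `u = (q - p) / (q + p)`, so that `1 + u = q / m`
and `1 - u = p / m`, the left-hand side is `m ^ 2`, and after taking logarithms and scaling by `m ^ 2`
the inequality (for `a < b`) becomes `2 u < (1 + u)² log (1 + u) - (1 - u)² log (1 - u)` on `(0, 1)`.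
Both sides vanish at `u = 0`, and the derivative of the difference is
`2 ((1 + u) log (1 + u) + (1 - u) log (1 - u))`, which is positive since `x log x > x - 1` for `x ≠ 1`. -/

open Real Set

lemma hasDerivAt_sq_mul_log {x : ℝ} (hx : x ≠ 0) :
    HasDerivAt (fun x => x ^ 2 * log x) (2 * (x * log x) + x) x := by
  refine ((hasDerivAt_pow 2 x).mul (hasDerivAt_log hx)).congr_deriv ?_
  field_simp
  ring

lemma two_mul_lt_sq_mul_log_sub_sq_mul_log {u : ℝ} (hu₀ : 0 < u) (hu₁ : u < 1) :
    2 * u < (1 + u) ^ 2 * log (1 + u) - (1 - u) ^ 2 * log (1 - u) := by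
  set h : ℝ → ℝ := fun u => (1 + u) ^ 2 * log (1 + u) - (1 - u) ^ 2 * log (1 - u) - 2 * u
  have h_deriv : ∀ u ∈ Ioo (-1 : ℝ) 1,
      HasDerivAt h (2 * ((1 + u) * log (1 + u) + (1 - u) * log (1 - u))) u := by
    intro u ⟨hl, hr⟩
    have hp := (hasDerivAt_sq_mul_log (x := 1 + u) (by linarith)).comp u
      ((hasDerivAt_id u).const_add 1)
    have hm := (hasDerivAt_sq_mul_log (x := 1 - u) (by linarith)).comp u
      ((hasDerivAt_id u).const_sub 1)
    refine ((hp.sub hm).sub ((hasDerivAt_id u).const_mul 2)).congr_deriv ?_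
    ring
  have h_mono : StrictMonoOn h (Ico 0 1) := by
    refine strictMonoOn_of_deriv_pos (convex_Ico 0 1) ?_ ?_
    · exact fun u hu => (h_deriv u ⟨by linarith [hu.1], hu.2⟩).continuousAt.continuousWithinAt
    · intro u hu
      rw [interior_Ico] at hu
      rw [(h_deriv u ⟨by linarith [hu.1], hu.2⟩).deriv]
      have hp := self_sub_one_lt_mul_log (x := 1 + u) (by linarith [hu.1]) (by linarith [hu.1])
      have hm := self_sub_one_lt_mul_log (x := 1 - u) (by linarith [hu.2]) (by linarith [hu.1])
      linarith
  have := h_mono ⟨le_rfl, one_pos⟩ ⟨hu₀.le, hu₁⟩ hu₀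
  simp only [h, add_zero, sub_zero, log_one, mul_zero, sub_self] at this
  linarith

lemma two_mul_log_sqrt_add_sqrt_div_two_lt {a b : ℝ} (ha : 0 < a) (hab : a < b) :
    2 * log ((√a + √b) / 2) < (b * log b - a * log a) / (b - a) - 1 := by
  obtain ⟨p, hp, rfl⟩ : ∃ p, 0 < p ∧ p ^ 2 = a := ⟨√a, sqrt_pos.2 ha, sq_sqrt ha.le⟩
  obtain ⟨q, hpq, rfl⟩ : ∃ q, p < q ∧ q ^ 2 = b :=
    ⟨√b, by simpa [hp.le] using sqrt_lt_sqrt (by positivity) hab, sq_sqrt (ha.trans hab).le⟩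
  have hq : 0 < q := hp.trans hpq
  set m := (p + q) / 2 with hm_def
  have hm : 0 < m := by positivity
  have h_u := two_mul_lt_sq_mul_log_sub_sq_mul_log (u := (q - p) / (q + p))
    (div_pos (by linarith) (by linarith)) ((div_lt_one (by linarith)).2 (by linarith))
  have hqm : 1 + (q - p) / (q + p) = q / m := by field_simp; ring
  have hpm : 1 - (q - p) / (q + p) = p / m := by field_simp; ring
  rw [hqm, hpm, log_div hq.ne' hm.ne', log_div hp.ne' hm.ne'] at h_u
  have h_scaled : (q ^ 2 - p ^ 2) / 2 < q ^ 2 * (log q - log m) - p ^ 2 * (log p - log m) :=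
    calc (q ^ 2 - p ^ 2) / 2 = 2 * ((q - p) / (q + p)) * m ^ 2 := by rw [hm_def]; field_simp; ring
      _ < ((q / m) ^ 2 * (log q - log m) - (p / m) ^ 2 * (log p - log m)) * m ^ 2 := by gcongr
      _ = q ^ 2 * (log q - log m) - p ^ 2 * (log p - log m) := by field_simp
  rw [sqrt_sq hp.le, sqrt_sq hq.le, ← hm_def, lt_sub_iff_add_lt, lt_div_iff₀ (sub_pos.2 hab),
    log_pow, log_pow]
  push_cast
  linarith

lemma one_div_exp_one_mul_rpow_eq_exp {a b : ℝ} (ha : 0 < a) (hb : 0 < b) :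
    1 / exp 1 * (b ^ b / a ^ a) ^ (1 / (b - a)) = exp ((b * log b - a * log a) / (b - a) - 1) := by
  rw [rpow_def_of_pos (by positivity), log_div (by positivity) (by positivity), log_rpow hb,
    log_rpow ha, exp_sub, one_div_mul_eq_div, mul_one_div]

theorem avg_arith_geom_lt_identric (a b : ℝ) (ha : 0 < a) (hb : 0 < b) (hab : a ≠ b) :
    ((a + b) / 2 + Real.sqrt (a * b)) / 2 <
      (1 / Real.exp 1) * (b ^ b / a ^ a) ^ (1 / (b - a)) := by
  have h_sq : ((a + b) / 2 + √(a * b)) / 2 = ((√a + √b) / 2) ^ 2 := by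
    rw [sqrt_mul ha.le]
    linear_combination -(sq_sqrt ha.le + sq_sqrt hb.le) / 4
  have h_log : 2 * log ((√a + √b) / 2) < (b * log b - a * log a) / (b - a) - 1 := by
    rcases hab.lt_or_gt with h | h
    · exact two_mul_log_sqrt_add_sqrt_div_two_lt ha h
    · rw [add_comm, ← neg_div_neg_eq (b * log b - a * log a), neg_sub, neg_sub]
      exact two_mul_log_sqrt_add_sqrt_div_two_lt hb h
  rw [one_div_exp_one_mul_rpow_eq_exp ha hb, h_sq, ← log_lt_iff_lt_exp (by positivity), log_pow]
  exact_mod_cast h_log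
end

section
/- For positive reals a, b with a ≠ b, the geometric mean of L(a,b) and I(a,b) exceeds the geometric mean of A(a,b) and G(a,b): √(A(a,b)·G(a,b)) < √(L(a,b)·I(a,b)). -/
open Real Set Filter Topology


lemma sinh_lt_mul_cosh {t : ℝ} (ht : 0 < t) : Real.sinh t < t * Real.cosh t := by
  have h : StrictMonoOn (fun x => x * Real.cosh x - Real.sinh x) (Ici 0) := by
    refine strictMonoOn_of_deriv_pos (convex_Ici 0) (by fun_prop) ?_
    intro x hx
    rw [interior_Ici, mem_Ioi] at hx
    have hd : HasDerivAt (fun x => x * Real.cosh x - Real.sinh x) (x * Real.sinh x) x := by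
      have := ((hasDerivAt_id x).mul (Real.hasDerivAt_cosh x)).sub (Real.hasDerivAt_sinh x)
      exact this.congr_deriv (by simp)
    rw [hd.deriv]
    positivity
  have := h (self_mem_Ici) (le_of_lt ht : (0:ℝ) ≤ t) ht
  simpa using this

lemma lt_sinh_mul_cosh {t : ℝ} (ht : 0 < t) : t < Real.sinh t * Real.cosh t := by
  have h2 : 2 * t < Real.sinh (2 * t) := Real.self_lt_sinh_iff.mpr (by linarith)
  rw [Real.sinh_two_mul] at h2
  linarith


noncomputable def fA (t : ℝ) : ℝ :=
  Real.log (Real.sinh t) - Real.log t + t * Real.cosh t / Real.sinh t - 1 - Real.log (Real.cosh t)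

lemma fA_hasDerivAt {t : ℝ} (ht : 0 < t) :
    HasDerivAt fA
      ((t * Real.cosh t - Real.sinh t) * (Real.sinh t * Real.cosh t - t)
        / (t * Real.sinh t ^ 2 * Real.cosh t)) t := by
  have hs : Real.sinh t ≠ 0 := Real.sinh_ne_zero.mpr ht.ne'
  have hsp : 0 < Real.sinh t := Real.sinh_pos_iff.mpr ht
  have hc : (0:ℝ) < Real.cosh t := Real.cosh_pos t
  have h1 : HasDerivAt (fun x => Real.log (Real.sinh x)) ((Real.sinh t)⁻¹ * Real.cosh t) t :=
    (Real.hasDerivAt_log hs).comp t (Real.hasDerivAt_sinh t)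
  have h2 : HasDerivAt Real.log t⁻¹ t := Real.hasDerivAt_log ht.ne'
  have h3 : HasDerivAt (fun x => x * Real.cosh x / Real.sinh x)
      (((1 * Real.cosh t + t * Real.sinh t) * Real.sinh t - t * Real.cosh t * Real.cosh t)
        / Real.sinh t ^ 2) t :=
    ((hasDerivAt_id t).mul (Real.hasDerivAt_cosh t)).div (Real.hasDerivAt_sinh t) hs
  have h4 : HasDerivAt (fun x => Real.log (Real.cosh x)) ((Real.cosh t)⁻¹ * Real.sinh t) t :=
    (Real.hasDerivAt_log hc.ne').comp t (Real.hasDerivAt_cosh t)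
  have h := (((h1.sub h2).add h3).sub (hasDerivAt_const t (1:ℝ))).sub h4
  refine h.congr_deriv ?_
  symm
  have hid : Real.cosh t ^ 2 - Real.sinh t ^ 2 = 1 := Real.cosh_sq_sub_sinh_sq t
  field_simp
  linear_combination (t^2 * Real.cosh t - t * Real.sinh t) * hid

lemma fA_strictMono : StrictMonoOn fA (Ioi 0) := by
  refine strictMonoOn_of_deriv_pos (convex_Ioi 0) (fun x hx => (fA_hasDerivAt hx).continuousAt.continuousWithinAt) ?_
  intro x hx
  rw [interior_Ioi, mem_Ioi] at hx
  rw [(fA_hasDerivAt hx).deriv]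
  have h1 := sinh_lt_mul_cosh hx
  have h2 := lt_sinh_mul_cosh hx
  have hsp : 0 < Real.sinh x := Real.sinh_pos_iff.mpr hx
  have hc : (0:ℝ) < Real.cosh x := Real.cosh_pos x
  apply div_pos (mul_pos (by linarith) (by linarith))
  positivity

lemma fA_tendsto : Tendsto fA (𝓝[>] 0) (𝓝 0) := by
  have hslope : Tendsto (fun t => Real.sinh t / t) (𝓝[>] 0) (𝓝 1) := by
    have h := (hasDerivAt_iff_tendsto_slope.mp (Real.hasDerivAt_sinh 0))
    rw [Real.cosh_zero] at h
    have h2 := h.mono_left (nhdsWithin_mono 0 (fun x hx => ne_of_gt hx : Ioi (0:ℝ) ⊆ {0}ᶜ))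
    refine h2.congr (fun t => ?_)
    simp [slope_def_field, Real.sinh_zero]
  have hL : Tendsto (fun t => Real.log (Real.sinh t / t)) (𝓝[>] 0) (𝓝 0) := by
    have := (Real.continuousAt_log (by norm_num : (1:ℝ) ≠ 0)).tendsto.comp hslope
    simpa [Function.comp_def] using this
  have hcosh : Tendsto (fun t => Real.cosh t) (𝓝[>] 0) (𝓝 1) := by
    have := (Real.continuous_cosh.tendsto 0).mono_left (nhdsWithin_le_nhds (s := Ioi (0:ℝ)))
    simpa using this
  have hC : Tendsto (fun t => Real.cosh t / (Real.sinh t / t)) (𝓝[>] 0) (𝓝 1) := by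
    have := hcosh.div hslope (by norm_num)
    simpa only [div_one, Pi.div_def] using this
  have hlc : Tendsto (fun t => Real.log (Real.cosh t)) (𝓝[>] 0) (𝓝 0) := by
    have := (Real.continuousAt_log (by norm_num : (1:ℝ) ≠ 0)).tendsto.comp hcosh
    simpa [Function.comp_def] using this
  have hmain := ((hL.add hC).sub (tendsto_const_nhds (x := (1:ℝ)))).sub hlc
  norm_num at hmain
  refine hmain.congr' ?_
  filter_upwards [self_mem_nhdsWithin] with t (ht : 0 < t)
  have hsp : 0 < Real.sinh t := Real.sinh_pos_iff.mpr ht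
  unfold fA
  rw [Real.log_div hsp.ne' ht.ne']
  have : Real.cosh t / (Real.sinh t / t) = t * Real.cosh t / Real.sinh t := by
    field_simp
  rw [this]

lemma fA_pos {t : ℝ} (ht : 0 < t) : 0 < fA t := by
  have h1 : fA (t/2) < fA t := fA_strictMono (by positivity : (0:ℝ) < t/2) ht (by linarith)
  have h2 : 0 ≤ fA (t/2) := by
    refine le_of_tendsto fA_tendsto ?_
    filter_upwards [Ioo_mem_nhdsGT_of_mem (by constructor <;> [exact le_refl (0:ℝ); positivity] : (0:ℝ) ∈ Ico 0 (t/2))] with u hu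
    exact (fA_strictMono hu.1 (by positivity : (0:ℝ) < t/2) hu.2).le
  linarith

lemma keyA {t : ℝ} (ht : 0 < t) :
    Real.log (Real.cosh t) + Real.log t + 1 < Real.log (Real.sinh t) + t * Real.cosh t / Real.sinh t := by
  have h := fA_pos ht
  unfold fA at h
  linarith

theorem main_lt (a b : ℝ) (ha : 0 < a) (hb : 0 < b) (hab : a < b) :
    Real.sqrt (((a + b) / 2) * Real.sqrt (a * b)) <
      Real.sqrt (((b - a) / (Real.log b - Real.log a)) *
        ((1 / Real.exp 1) * (b ^ b / a ^ a) ^ (1 / (b - a)))) := by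
  set s := (Real.log a + Real.log b) / 2 with hs_def
  set t := (Real.log b - Real.log a) / 2 with ht_def
  have hlab : Real.log a < Real.log b := Real.log_lt_log ha hab
  have ht : 0 < t := by rw [ht_def]; linarith
  have hsp : 0 < Real.sinh t := Real.sinh_pos_iff.mpr ht
  have hcp : (0:ℝ) < Real.cosh t := Real.cosh_pos t
  have hb_eq : b = Real.exp (s + t) := by
    rw [show s + t = Real.log b by rw [hs_def, ht_def]; ring, Real.exp_log hb]
  have ha_eq : a = Real.exp (s - t) := by
    rw [show s - t = Real.log a by rw [hs_def, ht_def]; ring, Real.exp_log ha]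
  have hG : Real.sqrt (a * b) = Real.exp s := by
    have : a * b = Real.exp s ^ 2 := by
      rw [ha_eq, hb_eq, ← Real.exp_add, sq, ← Real.exp_add]; ring_nf
    rw [this, Real.sqrt_sq (Real.exp_pos s).le]
  have hA : (a + b) / 2 = Real.exp s * Real.cosh t := by
    rw [ha_eq, hb_eq, Real.cosh_eq, Real.exp_add, show s - t = s + (-t) by ring, Real.exp_add]
    ring
  have hBA : b - a = Real.exp s * (2 * Real.sinh t) := by
    rw [ha_eq, hb_eq, Real.sinh_eq, Real.exp_add, show s - t = s + (-t) by ring, Real.exp_add]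
    ring
  have hL : (b - a) / (Real.log b - Real.log a) = Real.exp s * Real.sinh t / t := by
    rw [hBA, show Real.log b - Real.log a = 2 * t by rw [ht_def]; ring]
    field_simp
  have hI : (1 / Real.exp 1) * (b ^ b / a ^ a) ^ (1 / (b - a))
      = Real.exp (s + t * Real.cosh t / Real.sinh t - 1) := by
    have h1 : b ^ (b : ℝ) = Real.exp (Real.log b * b) := Real.rpow_def_of_pos hb b
    have h2 : a ^ (a : ℝ) = Real.exp (Real.log a * a) := Real.rpow_def_of_pos ha a
    have hX : Real.log b * b - Real.log a * a
        = Real.exp s * (2 * s * Real.sinh t + 2 * t * Real.cosh t) := by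
      rw [ha_eq, hb_eq, Real.log_exp, Real.log_exp, Real.sinh_eq, Real.cosh_eq,
        Real.exp_add, show s - t = s + (-t) by ring, Real.exp_add]
      ring
    have hratio : (Real.log b * b - Real.log a * a) * (1 / (b - a))
        = s + t * Real.cosh t / Real.sinh t := by
      rw [hX, hBA]
      have he : Real.exp s ≠ 0 := (Real.exp_pos s).ne'
      field_simp
    rw [h1, h2, ← Real.exp_sub, ← Real.exp_mul, hratio,
      show (1:ℝ) / Real.exp 1 = Real.exp (-1) by rw [Real.exp_neg, one_div],
      ← Real.exp_add]
    ring_nf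
  -- final comparison
  have hsq : (0:ℝ) ≤ ((a + b) / 2) * Real.sqrt (a * b) := by positivity
  apply Real.sqrt_lt_sqrt hsq
  have hXe : ((a + b) / 2) * Real.sqrt (a * b)
      = Real.exp (2 * s + Real.log (Real.cosh t)) := by
    rw [hA, hG, two_mul, Real.exp_add, Real.exp_add, Real.exp_log hcp]
    ring
  have hYe : ((b - a) / (Real.log b - Real.log a))
        * ((1 / Real.exp 1) * (b ^ b / a ^ a) ^ (1 / (b - a)))
      = Real.exp (2 * s + (Real.log (Real.sinh t) - Real.log t
          + t * Real.cosh t / Real.sinh t - 1)) := by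
    rw [hL, hI]
    have h3 : Real.exp s * Real.sinh t / t
        = Real.exp (s + Real.log (Real.sinh t) - Real.log t) := by
      rw [Real.exp_sub, Real.exp_add, Real.exp_log hsp, Real.exp_log ht]
    rw [h3, ← Real.exp_add]
    ring_nf
  rw [hXe, hYe]
  exact Real.exp_lt_exp.mpr (by have := keyA ht; linarith)

theorem sqrt_AG_lt_sqrt_LI (a b : ℝ) (ha : 0 < a) (hb : 0 < b) (hab : a ≠ b) :
    Real.sqrt (((a + b) / 2) * Real.sqrt (a * b)) <
      Real.sqrt (((b - a) / (Real.log b - Real.log a)) *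
        ((1 / Real.exp 1) * (b ^ b / a ^ a) ^ (1 / (b - a)))) := by
  rcases lt_or_gt_of_ne hab with h | h
  · exact main_lt a b ha hb h
  · have key := main_lt b a hb ha h
    have e1 : (b + a) / 2 = (a + b) / 2 := by ring
    have e2 : b * a = a * b := by ring
    have e3 : (a - b) / (Real.log a - Real.log b) = (b - a) / (Real.log b - Real.log a) := by
      rw [← neg_sub b a, ← neg_sub (Real.log b) (Real.log a), neg_div_neg_eq]
    have hpos : (0:ℝ) < b ^ (b:ℝ) / a ^ (a:ℝ) := by
      have h1 : (0:ℝ) < b ^ (b:ℝ) := Real.rpow_pos_of_pos hb b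
      have h2 : (0:ℝ) < a ^ (a:ℝ) := Real.rpow_pos_of_pos ha a
      positivity
    have e4 : (a ^ (a:ℝ) / b ^ (b:ℝ)) ^ ((1:ℝ) / (a - b))
        = (b ^ (b:ℝ) / a ^ (a:ℝ)) ^ ((1:ℝ) / (b - a)) := by
      rw [show a ^ (a:ℝ) / b ^ (b:ℝ) = (b ^ (b:ℝ) / a ^ (a:ℝ))⁻¹ by rw [inv_div],
        show (1:ℝ) / (a - b) = -(1 / (b - a)) by rw [show a - b = -(b - a) by ring, div_neg],
        Real.rpow_neg (inv_nonneg.mpr hpos.le), Real.inv_rpow hpos.le, inv_inv]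
    rw [e1, e2, e3, e4] at key
    exact key
end

section
/- For positive reals a, b with a ≠ b and real numbers r < s (with r, s ∉ {-1, 0}), the p-logarithmic means satisfy the strict monotonicity L_r(a,b) < L_s(a,b). -/
/-!
Since `L_p(a,b)^p` is the mean of `x ^ p` over `[a, b]`, we have `L_p = exp ((h p - h 0) / p)`
with `h p = log ∫_a^b x ^ p dx`. Hölder's inequality makes `h` convex, and the strict
Cauchy–Schwarz inequality for `x ^ (p / 2)` and `x ^ (q / 2)` (which are not proportional when
`p ≠ q`) makes it strictly midpoint convex, hence strictly convex. So the slopes of the secants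
of `h` through `0` increase strictly.
-/
open MeasureTheory Set Real

theorem ConvexOn.strictConvexOn_of_midpoint_lt {s : Set ℝ} {f : ℝ → ℝ} (hf : ConvexOn ℝ s f)
    (hmid : ∀ x ∈ s, ∀ y ∈ s, x ≠ y → f ((x + y) / 2) < (f x + f y) / 2) :
    StrictConvexOn ℝ s f := by
  refine strictConvexOn_iff_slope_strict_mono_adjacent.2 ⟨hf.1, fun x y z hx hz hxy hyz => ?_⟩
  have hy : y ∈ s := hf.1.ordConnected.out hx hz ⟨hxy.le, hyz.le⟩
  have hm : (y + z) / 2 ∈ s := hf.1.ordConnected.out hx hz ⟨by linarith, by linarith⟩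
  calc (f y - f x) / (y - x) ≤ (f ((y + z) / 2) - f y) / ((y + z) / 2 - y) :=
        hf.slope_mono_adjacent hx hm hxy (by linarith)
    _ = 2 * (f ((y + z) / 2) - f y) / (z - y) := by
        rw [show (y + z) / 2 - y = (z - y) / 2 by ring]; field_simp
    _ < (f z - f y) / (z - y) := by
        gcongr ?_ / _
        linarith [hmid y hy z hz hyz.ne]

theorem sq_integral_mul_lt_integral_sq_mul_integral_sq {α : Type*} [MeasurableSpace α]
    {μ : Measure α} {f g : α → ℝ} (hf : Integrable (fun x => f x ^ 2) μ)
    (hg : Integrable (fun x => g x ^ 2) μ) (hfg : Integrable (fun x => f x * g x) μ)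
    (hg0 : 0 < ∫ x, g x ^ 2 ∂μ) (hne : ∀ t : ℝ, ¬ f =ᵐ[μ] fun x => t * g x) :
    (∫ x, f x * g x ∂μ) ^ 2 < (∫ x, f x ^ 2 ∂μ) * ∫ x, g x ^ 2 ∂μ := by
  set t := (∫ x, f x * g x ∂μ) / ∫ x, g x ^ 2 ∂μ
  have hexpand : (fun x => (f x - t * g x) ^ 2)
      = fun x => f x ^ 2 - 2 * t * (f x * g x) + t ^ 2 * g x ^ 2 := by
    funext x; ring
  have h₁ : Integrable (fun x => f x ^ 2 - 2 * t * (f x * g x)) μ := hf.sub (hfg.const_mul _)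
  have h₂ : Integrable (fun x => t ^ 2 * g x ^ 2) μ := hg.const_mul _
  have hint : Integrable (fun x => (f x - t * g x) ^ 2) μ := by
    rw [hexpand]; exact h₁.add h₂
  have hpos : 0 < ∫ x, (f x - t * g x) ^ 2 ∂μ := by
    refine (integral_nonneg fun x => sq_nonneg _).lt_of_ne fun h => hne t ?_
    filter_upwards [(integral_eq_zero_iff_of_nonneg (fun x => sq_nonneg _) hint).1 h.symm]
      with x hx
    simpa [sub_eq_zero] using hx
  rw [hexpand, integral_add h₁ h₂, integral_sub hf (hfg.const_mul _), integral_const_mul,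
    integral_const_mul] at hpos
  have key : (∫ x, f x ^ 2 ∂μ) * ∫ x, g x ^ 2 ∂μ - (∫ x, f x * g x ∂μ) ^ 2
      = (∫ x, f x ^ 2 ∂μ - 2 * t * ∫ x, f x * g x ∂μ + t ^ 2 * ∫ x, g x ^ 2 ∂μ)
        * ∫ x, g x ^ 2 ∂μ := by
    simp only [t]; field_simp; ring
  nlinarith [mul_pos hpos hg0]

section PowerIntegral

variable {a b : ℝ}

theorem memLp_rpow_Ioc (ha : 0 < a) (c : ℝ) (p : ENNReal) :
    MemLp (fun x : ℝ => x ^ c) p (volume.restrict (Ioc a b)) := by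
  refine MemLp.of_bound (by fun_prop) (max (a ^ c) (b ^ c)) ?_
  filter_upwards [ae_restrict_mem measurableSet_Ioc] with x hx
  have hx0 : 0 < x := ha.trans hx.1
  rw [norm_of_nonneg (rpow_pos_of_pos hx0 c).le]
  rcases le_or_gt 0 c with hc | hc
  · exact le_max_of_le_right (rpow_le_rpow hx0.le hx.2 hc)
  · exact le_max_of_le_left (rpow_le_rpow_of_nonpos ha hx.1.le hc.le)

theorem setIntegral_rpow_Ioc_pos (ha : 0 < a) (hab : a < b) (p : ℝ) :
    0 < ∫ x in Ioc a b, x ^ p := by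
  rw [← intervalIntegral.integral_of_le hab.le]
  refine intervalIntegral.intervalIntegral_pos_of_pos_on ?_
    (fun x hx => rpow_pos_of_pos (ha.trans hx.1) p) hab
  exact (intervalIntegrable_iff_integrableOn_Ioc_of_le hab.le).2
    (memLp_one_iff_integrable.1 (memLp_rpow_Ioc ha p 1))

theorem setIntegral_rpow_Ioc (ha : 0 < a) (hab : a ≤ b) {p : ℝ} (hp : p ≠ -1) :
    ∫ x in Ioc a b, x ^ p = (b ^ (p + 1) - a ^ (p + 1)) / (p + 1) := by
  rw [← intervalIntegral.integral_of_le hab, integral_rpow (Or.inr ⟨hp, ?_⟩)]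
  rw [uIcc_of_le hab]
  exact fun h => h.1.not_gt ha

theorem setIntegral_rpow_Ioc_convexComb_le (ha : 0 < a) (p q : ℝ) {θ : ℝ} (hθ₀ : 0 < θ)
    (hθ₁ : θ < 1) :
    ∫ x in Ioc a b, x ^ (θ * p + (1 - θ) * q) ≤
      (∫ x in Ioc a b, x ^ p) ^ θ * (∫ x in Ioc a b, x ^ q) ^ (1 - θ) := by
  have hpos : ∀ c : ℝ, 0 ≤ᵐ[volume.restrict (Ioc a b)] fun x : ℝ => x ^ c := fun c => by
    filter_upwards [ae_restrict_mem measurableSet_Ioc] with x hx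
    exact (rpow_pos_of_pos (ha.trans hx.1) c).le
  have holder := integral_mul_le_Lp_mul_Lq_of_nonneg
    (holderConjugate_one_div hθ₀ (sub_pos.2 hθ₁) (by ring)) (hpos (θ * p)) (hpos ((1 - θ) * q))
    (memLp_rpow_Ioc ha _ _) (memLp_rpow_Ioc ha _ _)
  rw [one_div_one_div, one_div_one_div] at holder
  calc ∫ x in Ioc a b, x ^ (θ * p + (1 - θ) * q)
      = ∫ x in Ioc a b, x ^ (θ * p) * x ^ ((1 - θ) * q) := by
        refine setIntegral_congr_fun measurableSet_Ioc fun x hx => ?_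
        rw [← rpow_add (ha.trans hx.1)]
    _ ≤ (∫ x in Ioc a b, (x ^ (θ * p)) ^ (1 / θ)) ^ θ
          * (∫ x in Ioc a b, (x ^ ((1 - θ) * q)) ^ (1 / (1 - θ))) ^ (1 - θ) := holder
    _ = (∫ x in Ioc a b, x ^ p) ^ θ * (∫ x in Ioc a b, x ^ q) ^ (1 - θ) := by
        congr 2 <;> refine setIntegral_congr_fun measurableSet_Ioc fun x hx => ?_ <;>
          rw [← rpow_mul (ha.trans hx.1).le] <;> congr 1 <;> field_simp [(sub_pos.2 hθ₁).ne']

theorem rpow_not_ae_eq_const_mul_rpow (ha : 0 < a) (hab : a < b) {p q : ℝ} (hpq : p ≠ q)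
    (t : ℝ) : ¬ (fun x : ℝ => x ^ p) =ᵐ[volume.restrict (Ioc a b)] fun x => t * x ^ q := by
  intro h
  have hsub : {x | x ∈ Ioc a b ∧ x ^ p = t * x ^ q}.Subsingleton := by
    rintro x ⟨hx, hxt⟩ y ⟨hy, hyt⟩
    have hx0 := ha.trans hx.1
    have hy0 := ha.trans hy.1
    refine rpow_left_injOn (sub_ne_zero.2 hpq) hx0.le hy0.le ?_
    simp only [rpow_sub hx0, rpow_sub hy0, hxt, hyt]
    rw [mul_div_cancel_right₀ _ (rpow_pos_of_pos hx0 q).ne',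
      mul_div_cancel_right₀ _ (rpow_pos_of_pos hy0 q).ne']
  have hfalse : ∀ᵐ x ∂volume.restrict (Ioc a b), False := by
    filter_upwards [ae_restrict_mem measurableSet_Ioc, h,
      ae_restrict_of_ae (measure_eq_zero_iff_ae_notMem.1 (hsub.measure_zero volume))]
      with x hx hxt hnot using hnot ⟨hx, hxt⟩
  rw [Filter.eventually_false_iff_eq_bot, ae_eq_bot, Measure.restrict_eq_zero,
    Real.volume_Ioc] at hfalse
  exact hab.not_ge (by simpa using hfalse)

theorem sq_setIntegral_rpow_midpoint_lt (ha : 0 < a) (hab : a < b) {p q : ℝ} (hpq : p ≠ q) :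
    (∫ x in Ioc a b, x ^ ((p + q) / 2)) ^ 2 <
      (∫ x in Ioc a b, x ^ p) * ∫ x in Ioc a b, x ^ q := by
  have hsq : ∀ c : ℝ, ∫ x in Ioc a b, (x ^ (c / 2)) ^ 2 = ∫ x in Ioc a b, x ^ c := fun c =>
    setIntegral_congr_fun measurableSet_Ioc fun x hx => by
      rw [← rpow_natCast, ← rpow_mul (ha.trans hx.1).le]; norm_num
  have hmul : ∫ x in Ioc a b, x ^ (p / 2) * x ^ (q / 2) = ∫ x in Ioc a b, x ^ ((p + q) / 2) :=
    setIntegral_congr_fun measurableSet_Ioc fun x hx => by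
      rw [← rpow_add (ha.trans hx.1)]; ring_nf
  have cs := sq_integral_mul_lt_integral_sq_mul_integral_sq
    (memLp_rpow_Ioc ha (p / 2) 2).integrable_sq (memLp_rpow_Ioc ha (q / 2) 2).integrable_sq
    ((memLp_rpow_Ioc ha (p / 2) 2).integrable_mul (memLp_rpow_Ioc ha (q / 2) 2))
    (by rw [hsq]; exact setIntegral_rpow_Ioc_pos ha hab q)
    (rpow_not_ae_eq_const_mul_rpow ha hab (by contrapose! hpq; linarith))
  rwa [hsq, hsq, hmul] at cs

end PowerIntegral

noncomputable def logIntegralRpow (a b p : ℝ) : ℝ := log (∫ x in Ioc a b, x ^ p)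

section LogIntegralRpow

variable {a b : ℝ}

theorem convexOn_logIntegralRpow (ha : 0 < a) (hab : a < b) :
    ConvexOn ℝ univ (logIntegralRpow a b) := by
  refine convexOn_iff_forall_pos.2 ⟨convex_univ, fun p _ q _ θ θ' hθ hθ' hsum => ?_⟩
  obtain rfl : θ' = 1 - θ := by linarith
  have hJ := setIntegral_rpow_Ioc_pos ha hab
  calc log (∫ x in Ioc a b, x ^ (θ • p + (1 - θ) • q))
      ≤ log ((∫ x in Ioc a b, x ^ p) ^ θ * (∫ x in Ioc a b, x ^ q) ^ (1 - θ)) :=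
        log_le_log (hJ _) (setIntegral_rpow_Ioc_convexComb_le ha p q hθ (by linarith))
    _ = θ • logIntegralRpow a b p + (1 - θ) • logIntegralRpow a b q := by
        rw [log_mul (rpow_pos_of_pos (hJ p) θ).ne' (rpow_pos_of_pos (hJ q) _).ne',
          log_rpow (hJ p), log_rpow (hJ q)]
        rfl

theorem strictConvexOn_logIntegralRpow (ha : 0 < a) (hab : a < b) :
    StrictConvexOn ℝ univ (logIntegralRpow a b) := by
  refine (convexOn_logIntegralRpow ha hab).strictConvexOn_of_midpoint_lt fun p _ q _ hpq => ?_
  have hJ := setIntegral_rpow_Ioc_pos ha hab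
  have h := log_lt_log (pow_pos (hJ _) 2) (sq_setIntegral_rpow_midpoint_lt ha hab hpq)
  rw [log_pow, log_mul (hJ p).ne' (hJ q).ne'] at h
  unfold logIntegralRpow
  push_cast at h
  linarith

theorem logMean_eq_exp_slope (ha : 0 < a) (hab : a < b) {p : ℝ} (hp : p ≠ -1) :
    ((b ^ (p + 1) - a ^ (p + 1)) / ((p + 1) * (b - a))) ^ (1 / p) =
      exp ((logIntegralRpow a b p - logIntegralRpow a b 0) / (p - 0)) := by
  have hJ₀ : ∫ x in Ioc a b, x ^ (0 : ℝ) = b - a := by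
    rw [setIntegral_rpow_Ioc ha hab.le (by norm_num)]; simp
  have hJ := setIntegral_rpow_Ioc_pos ha hab
  rw [← div_div, ← setIntegral_rpow_Ioc ha hab.le hp, ← hJ₀,
    rpow_def_of_pos (div_pos (hJ p) (hJ 0)), log_div (hJ p).ne' (hJ 0).ne', sub_zero,
    ← div_eq_mul_one_div]
  rfl

end LogIntegralRpow

theorem Lp_strict_mono (a b r s : ℝ) (ha : 0 < a) (hb : 0 < b) (hab : a ≠ b)
    (hrs : r < s) (hr1 : r ≠ -1) (hr0 : r ≠ 0) (hs1 : s ≠ -1) (hs0 : s ≠ 0) :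
    ((b ^ (r + 1) - a ^ (r + 1)) / ((r + 1) * (b - a))) ^ (1 / r) <
      ((b ^ (s + 1) - a ^ (s + 1)) / ((s + 1) * (b - a))) ^ (1 / s) := by
  wlog hlt : a < b generalizing a b
  · have hsymm : ∀ p : ℝ, (b ^ (p + 1) - a ^ (p + 1)) / ((p + 1) * (b - a)) =
        (a ^ (p + 1) - b ^ (p + 1)) / ((p + 1) * (a - b)) := fun p => by
      rw [← neg_div_neg_eq]; ring_nf
    rw [hsymm r, hsymm s]
    exact this b a hb ha hab.symm (hab.lt_or_gt.resolve_left hlt)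
  rw [logMean_eq_exp_slope ha hlt hr1, logMean_eq_exp_slope ha hlt hs1, exp_lt_exp]
  exact (strictConvexOn_logIntegralRpow ha hlt).secant_strict_mono (mem_univ 0) (mem_univ r)
    (mem_univ s) hr0 hs0 hrs
end

section
/- For positive reals a, b with a ≠ b, the logarithmic mean satisfies √(ab) < L(a,b) < ((a^{1/3} + b^{1/3})/2)³, i.e. L(a,b) lies strictly between the geometric mean and the power mean of order 1/3. -/
lemma lemA {s : ℝ} (hs : 1 < s) : 2 * Real.log s < s - 1/s := by
  have key : StrictMonoOn (fun x : ℝ => x - 1/x - 2 * Real.log x) (Set.Ici 1) := by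
    apply strictMonoOn_of_deriv_pos (convex_Ici 1)
    · apply ContinuousOn.sub (ContinuousOn.sub continuousOn_id ?_) ?_
      · exact ContinuousOn.div continuousOn_const continuousOn_id
          (fun x hx => by simp at hx; positivity)
      · exact ContinuousOn.mul continuousOn_const
          (Real.continuousOn_log.mono (fun x hx => by simp at hx ⊢; positivity))
    · intro x hx
      rw [interior_Ici] at hx
      have hx1lt : (1:ℝ) < x := hx
      have hx0 : 0 < x := lt_trans one_pos hx
      have hd : HasDerivAt (fun x : ℝ => x - 1/x - 2 * Real.log x)
          (1 - (-(1/x^2)) - 2 * x⁻¹) x := by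
        have h1 : HasDerivAt (fun x : ℝ => 1/x) (-(1/x^2)) x := by
          simpa [one_div] using hasDerivAt_inv hx0.ne'
        exact ((hasDerivAt_id x).sub h1).sub
          ((Real.hasDerivAt_log hx0.ne').const_mul 2)
      rw [hd.deriv]
      have h2 : 1 - (-(1/x^2)) - 2 * x⁻¹ = ((x-1)/x)^2 := by
        field_simp; ring
      rw [h2]
      exact pow_pos (div_pos (by linarith [hx1lt]) hx0) 2
  have h := key (Set.self_mem_Ici) (Set.mem_Ici.mpr hs.le) hs
  simp only [Real.log_one, one_div] at h ⊢
  norm_num at h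
  linarith

lemma lemB {s : ℝ} (hs : 1 < s) : 8*(s^3-1) < 3*(s+1)^3 * Real.log s := by
  have key : StrictMonoOn (fun x : ℝ => Real.log x - 8*(x^3-1)/(3*(x+1)^3)) (Set.Ici 1) := by
    apply strictMonoOn_of_deriv_pos (convex_Ici 1)
    · apply ContinuousOn.sub
      · exact Real.continuousOn_log.mono (fun x hx => by simp at hx ⊢; positivity)
      · apply ContinuousOn.div (by fun_prop) (by fun_prop)
        intro x hx
        simp at hx
        positivity
    · intro x hx
      rw [interior_Ici] at hx
      have hx1lt : (1:ℝ) < x := hx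
      have hx0 : 0 < x := lt_trans one_pos hx
      have hx1 : (0:ℝ) < x + 1 := by linarith
      have hd : HasDerivAt (fun x : ℝ => Real.log x - 8*(x^3-1)/(3*(x+1)^3))
          (1/x - ((8*(3*x^2)) * (3*(x+1)^3) - (8*(x^3-1)) * (3*(3*(x+1)^2))) / (3*(x+1)^3)^2) x := by
        apply HasDerivAt.sub
        · simpa [one_div] using Real.hasDerivAt_log hx0.ne'
        · apply HasDerivAt.div
          · have : HasDerivAt (fun x : ℝ => x^3 - 1) (3*x^2) x := by
              simpa using ((hasDerivAt_pow 3 x).sub_const 1)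
            simpa [mul_comm] using this.const_mul 8
          · have : HasDerivAt (fun x : ℝ => (x+1)^3) (3*(x+1)^2) x := by
              have := (hasDerivAt_pow 3 (x+1)).comp x ((hasDerivAt_id x).add_const 1)
              simpa [Function.comp_def] using this
            simpa [mul_comm] using this.const_mul 3
          · positivity
      rw [hd.deriv]
      have h2 : 1/x - ((8*(3*x^2)) * (3*(x+1)^3) - (8*(x^3-1)) * (3*(3*(x+1)^2))) / (3*(x+1)^3)^2
          = (x-1)^4 / (x * (x+1)^4) := by
        field_simp
        ring
      rw [h2]
      exact div_pos (pow_pos (by linarith [hx1lt]) 4) (by positivity)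
  have h := key (Set.self_mem_Ici) (Set.mem_Ici.mpr hs.le) hs
  simp at h
  have hs1 : (0:ℝ) < 3*(s+1)^3 := by positivity
  rw [div_lt_iff₀ hs1] at h
  linarith [h]

lemma lin_aux (a b : ℝ) (ha : 0 < a) (hlt : a < b) :
    Real.sqrt (a * b) < (b - a) / (Real.log b - Real.log a) ∧
    (b - a) / (Real.log b - Real.log a) <
      ((a ^ ((1 : ℝ) / 3) + b ^ ((1 : ℝ) / 3)) / 2) ^ 3 := by
  have hb : 0 < b := lt_trans ha hlt
  have hba : 1 < b / a := (one_lt_div ha).mpr hlt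
  have hba0 : 0 < b / a := by linarith
  constructor
  · set s := Real.sqrt (b/a) with hs_def
    have hs1 : 1 < s := by
      rw [hs_def, show (1:ℝ) = Real.sqrt 1 by simp]
      exact Real.sqrt_lt_sqrt zero_le_one hba
    have hs0 : 0 < s := lt_trans one_pos hs1
    have hs2 : s^2 = b / a := Real.sq_sqrt hba0.le
    have hbeq : b = a * s^2 := by rw [hs2]; field_simp
    have hlog : Real.log b - Real.log a = 2 * Real.log s := by
      rw [← Real.log_div hb.ne' ha.ne', ← hs2, Real.log_pow]
      push_cast; ring
    have hsqrt : Real.sqrt (a * b) = a * s := by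
      rw [hbeq, show a * (a * s^2) = (a*s)^2 by ring]
      exact Real.sqrt_sq (by positivity)
    have hlogpos : 0 < 2 * Real.log s := by
      have := Real.log_pos hs1; linarith
    rw [hsqrt, hlog, hbeq, lt_div_iff₀ hlogpos]
    have hA := lemA hs1
    have hmul := mul_lt_mul_of_pos_left hA (mul_pos ha hs0)
    have hinv : s * (1/s) = 1 := mul_one_div_cancel hs0.ne'
    nlinarith [hmul, hinv]
  · set t := (b/a) ^ ((1:ℝ)/3) with ht_def
    have ht1 : 1 < t := Real.one_lt_rpow_iff_of_pos hba0 |>.mpr (Or.inl ⟨hba, by norm_num⟩)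
    have ht0 : 0 < t := lt_trans one_pos ht1
    have ht3 : t^3 = b / a := by
      rw [ht_def, ← Real.rpow_natCast ((b/a) ^ ((1:ℝ)/3)) 3, ← Real.rpow_mul hba0.le]
      norm_num
    have hbeq : b = a * t^3 := by rw [ht3]; field_simp
    have hlog : Real.log b - Real.log a = 3 * Real.log t := by
      rw [← Real.log_div hb.ne' ha.ne', ← ht3, Real.log_pow]
      push_cast; ring
    have hb13 : b ^ ((1:ℝ)/3) = a ^ ((1:ℝ)/3) * t := by
      rw [ht_def, Real.div_rpow hb.le ha.le]
      field_simp
    have ha13 : (a ^ ((1:ℝ)/3))^3 = a := by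
      rw [← Real.rpow_natCast (a ^ ((1:ℝ)/3)) 3, ← Real.rpow_mul ha.le]
      norm_num
    have ha130 : 0 < a ^ ((1:ℝ)/3) := Real.rpow_pos_of_pos ha _
    have hrhs : ((a ^ ((1 : ℝ) / 3) + b ^ ((1 : ℝ) / 3)) / 2) ^ 3
        = a * ((1 + t)/2)^3 := by
      rw [hb13, show a ^ ((1:ℝ)/3) + a ^ ((1:ℝ)/3) * t = a ^ ((1:ℝ)/3) * (1 + t) by ring]
      rw [div_pow, mul_pow, ha13, mul_div_assoc, div_pow]
    have hlogpos : 0 < 3 * Real.log t := by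
      have := Real.log_pos ht1; linarith
    rw [hlog, hrhs, div_lt_iff₀ hlogpos, hbeq]
    have hB := lemB ht1
    have hmul := mul_lt_mul_of_pos_left hB ha
    nlinarith [hmul]

theorem lin_inequality (a b : ℝ) (ha : 0 < a) (hb : 0 < b) (hab : a ≠ b) :
    Real.sqrt (a * b) < (b - a) / (Real.log b - Real.log a) ∧
    (b - a) / (Real.log b - Real.log a) <
      ((a ^ ((1 : ℝ) / 3) + b ^ ((1 : ℝ) / 3)) / 2) ^ 3 := by
  rcases lt_or_gt_of_ne hab with h | h
  · exact lin_aux a b ha h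
  · have := lin_aux b a hb h
    have hsym : (a - b) / (Real.log a - Real.log b) = (b - a) / (Real.log b - Real.log a) := by
      rw [show a - b = -(b - a) by ring, show Real.log a - Real.log b = -(Real.log b - Real.log a) by ring,
        neg_div_neg_eq]
    rw [mul_comm b a, hsym, add_comm (b ^ ((1:ℝ)/3)) (a ^ ((1:ℝ)/3))] at this
    exact this
end

section
/- Let p, q : X → ℝ be probability densities with respect to μ that are positive μ-a.e. Then 1 - (1/2)∫|p - q| dμ ≤ ∫ 2p(x)q(x)/(p(x)+q(x)) dμ ≤ ∫ √(p(x)q(x)) dμ ≤ 1 + (1/2)∫|p - q| dμ, i.e. the harmonic divergence is at most the Bhattacharyya distance, and both lie between 1 ∓ half the variation distance. -/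
open MeasureTheory

private lemma aux1 (a b : ℝ) (ha : 0 < a) (hb : 0 < b) :
    (a + b) / 2 - |a - b| / 2 ≤ 2 * a * b / (a + b) := by
  rw [le_div_iff₀ (by linarith)]
  rcases le_total a b with h | h
  · rw [abs_of_nonpos (by linarith)]; nlinarith
  · rw [abs_of_nonneg (by linarith)]; nlinarith

private lemma sqrt_am (a b : ℝ) (ha : 0 < a) (hb : 0 < b) :
    2 * Real.sqrt (a * b) ≤ a + b := by
  rw [Real.sqrt_mul ha.le]
  nlinarith [Real.sq_sqrt ha.le, Real.sq_sqrt hb.le, Real.sqrt_nonneg a,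
    Real.sqrt_nonneg b, sq_nonneg (Real.sqrt a - Real.sqrt b)]

private lemma aux2 (a b : ℝ) (ha : 0 < a) (hb : 0 < b) :
    2 * a * b / (a + b) ≤ Real.sqrt (a * b) := by
  have hs := Real.sq_sqrt (mul_pos ha hb).le
  have hs0 := Real.sqrt_pos.mpr (mul_pos ha hb)
  have h2 := sqrt_am a b ha hb
  rw [div_le_iff₀ (by linarith)]
  nlinarith

theorem harmonic_bhattacharyya_variation (X : Type*) [MeasurableSpace X] (μ : Measure X)
    [SigmaFinite μ] (p q : X → ℝ) (hp : Measurable p) (hq : Measurable q)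
    (hp0 : ∀ᵐ x ∂μ, 0 < p x) (hq0 : ∀ᵐ x ∂μ, 0 < q x)
    (hpi : Integrable p μ) (hqi : Integrable q μ)
    (hp1 : ∫ x, p x ∂μ = 1) (hq1 : ∫ x, q x ∂μ = 1)
    (hHa : Integrable (fun x => 2 * p x * q x / (p x + q x)) μ)
    (hB : Integrable (fun x => Real.sqrt (p x * q x)) μ) :
    1 - (1 / 2) * ∫ x, |p x - q x| ∂μ ≤ ∫ x, 2 * p x * q x / (p x + q x) ∂μ ∧
    ∫ x, 2 * p x * q x / (p x + q x) ∂μ ≤ ∫ x, Real.sqrt (p x * q x) ∂μ ∧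
    ∫ x, Real.sqrt (p x * q x) ∂μ ≤ 1 + (1 / 2) * ∫ x, |p x - q x| ∂μ := by
  have hvi : Integrable (fun x => |p x - q x|) μ := (hpi.sub hqi).abs
  have hsumi : Integrable (fun x => (p x + q x) / 2) μ := (hpi.add hqi).div_const 2
  have hsum : ∫ x, (p x + q x) / 2 ∂μ = 1 := by
    rw [integral_div, integral_add hpi hqi, hp1, hq1]; norm_num
  refine ⟨?_, ?_, ?_⟩
  · have hI1 : ∫ x, ((p x + q x) / 2 - |p x - q x| / 2) ∂μ
        = 1 - (1 / 2) * ∫ x, |p x - q x| ∂μ := by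
      rw [integral_sub hsumi (hvi.div_const 2), hsum, integral_div]; ring
    rw [← hI1]
    exact integral_mono_ae (hsumi.sub (hvi.div_const 2)) hHa
      (by filter_upwards [hp0, hq0] with x hx hy using aux1 _ _ hx hy)
  · exact integral_mono_ae hHa hB
      (by filter_upwards [hp0, hq0] with x hx hy using aux2 _ _ hx hy)
  · have h1 : ∫ x, Real.sqrt (p x * q x) ∂μ ≤ ∫ x, (p x + q x) / 2 ∂μ :=
      integral_mono_ae hB hsumi
        (by filter_upwards [hp0, hq0] with x hx hy
            have := sqrt_am _ _ hx hy; linarith)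
    have h2 : 0 ≤ ∫ x, |p x - q x| ∂μ :=
      integral_nonneg fun x => abs_nonneg _
    rw [hsum] at h1
    nlinarith
end
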